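/- arXiv:2604.22832 — 3 statements merged into one kernel-verified Lean document; each statement's English description precedes it below -/
import Mathlib

section
/- Transcriptome-guided learning risk bound (finite version): Let I, R, C, D be finite types, P a probability mass function on I × R × C × D, and T : I → R → C → (D → ℝ) a family of strictly positive probability mass functions. Define the marginalized predictor S(d | i, c) = ∑_r P(r | i, c) · T(d | i, r, c), where P(r | i, c) is the conditional of R given (I, C) (defined whenever the marginal P(i, c) > 0). Then the log-loss risk L[S] = ∑_{(i,c,d)} P(i,c,d) · (-log S(d | i,c)) satisfies L[S] ≤ H(D | I, C) + ∑_{(i,r,c)} P(i,r,c) · KL(P(D | i,r,c) ‖ T(· | i,r,c)), where H(D | I, C) = ∑_{(i,c)} P(i,c) · H(P(D | i,c)) is the conditional entropy. -/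
/-!
Fix `(i, c, d)` and put `a r = P(i, r, c, d)`, `b r = P(i, r, c) T(d | i, r, c)`. Then
`∑ r, a r = P(i, c, d)` and `∑ r, b r = P(i, c) S(d | i, c)`, so the log-sum inequality
`(∑ a) log (∑ a / ∑ b) ≤ ∑ a log (a / b)` is exactly the pointwise bound
`-P(i, c, d) log S(d | i, c) ≤ -P(i, c, d) log P(d | i, c)
  + ∑ r, P(i, r, c, d) log (P(d | i, r, c) / T(d | i, r, c))`.
Summing over `(i, c, d)` and regrouping the last sum by `(i, r, c)` gives the risk bound.
-/

open Real

noncomputable section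

variable {I R C D : Type*} [Fintype I] [Fintype R] [Fintype C] [Fintype D]

/-- Marginal P(i,c). -/
def margIC (P : I × R × C × D → ℝ) (i : I) (c : C) : ℝ :=
  ∑ r, ∑ d, P (i, r, c, d)

/-- Marginal P(i,r,c). -/
def margIRC (P : I × R × C × D → ℝ) (i : I) (r : R) (c : C) : ℝ :=
  ∑ d, P (i, r, c, d)

/-- Marginal P(i,c,d). -/
def margICD (P : I × R × C × D → ℝ) (i : I) (c : C) (d : D) : ℝ :=
  ∑ r, P (i, r, c, d)

/-- Conditional P(r | i,c) (zero by convention when the marginal vanishes,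
since division by zero is zero). -/
def condR_IC (P : I × R × C × D → ℝ) (r : R) (i : I) (c : C) : ℝ :=
  margIRC P i r c / margIC P i c

/-- Conditional P(d | i,c). -/
def condD_IC (P : I × R × C × D → ℝ) (d : D) (i : I) (c : C) : ℝ :=
  margICD P i c d / margIC P i c

/-- Conditional P(d | i,r,c). -/
def condD_IRC (P : I × R × C × D → ℝ) (d : D) (i : I) (r : R) (c : C) : ℝ :=
  P (i, r, c, d) / margIRC P i r c

/-- Marginalized (student) predictor S(d | i,c) = ∑_r P(r|i,c) T(d|i,r,c). -/
def student (P : I × R × C × D → ℝ) (T : I → R → C → D → ℝ)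
    (d : D) (i : I) (c : C) : ℝ :=
  ∑ r, condR_IC P r i c * T i r c d

namespace Real

/-- A tangent-line bound for `x ↦ x log x`, via `log y ≥ 1 - 1/y`. -/
lemma mul_log_add_sub_le_mul_log_div {a b t : ℝ} (ha : 0 ≤ a) (hb : 0 ≤ b) (ht : 0 < t)
    (hab : 0 < a → 0 < b) : a * log t + (a - t * b) ≤ a * log (a / b) := by
  rcases ha.eq_or_lt with rfl | ha
  · simp only [zero_mul, zero_sub, zero_add, zero_div, log_zero, mul_zero, neg_nonpos]
    positivity
  have hb := hab ha
  have hlog : 1 - t * b / a ≤ log (a / b) - log t := by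
    rw [← log_div (by positivity) ht.ne']
    convert one_sub_inv_le_log_of_pos (x := a / b / t) (by positivity) using 2
    field_simp
  calc a * log t + (a - t * b) = a * log t + a * (1 - t * b / a) := by field_simp
    _ ≤ a * log t + a * (log (a / b) - log t) := by gcongr
    _ = a * log (a / b) := by ring

variable {ι : Type*} {s : Finset ι} {a b : ι → ℝ}

lemma sum_pos_of_pos_imp_pos (hb : ∀ i ∈ s, 0 ≤ b i) (hab : ∀ i ∈ s, 0 < a i → 0 < b i)
    (ha : 0 < ∑ i ∈ s, a i) : 0 < ∑ i ∈ s, b i := by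
  obtain ⟨i, hi, hai⟩ := Finset.exists_lt_of_sum_lt (f := fun _ => (0 : ℝ)) (by simpa using ha)
  exact Finset.sum_pos' hb ⟨i, hi, hab i hi hai⟩

/-- The log-sum inequality. -/
theorem sum_mul_log_div_sum_le (ha : ∀ i ∈ s, 0 ≤ a i) (hb : ∀ i ∈ s, 0 ≤ b i)
    (hab : ∀ i ∈ s, 0 < a i → 0 < b i) :
    (∑ i ∈ s, a i) * log ((∑ i ∈ s, a i) / ∑ i ∈ s, b i) ≤ ∑ i ∈ s, a i * log (a i / b i) := by
  rcases (Finset.sum_nonneg ha).eq_or_lt with hA | hA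
  · have ha0 := (Finset.sum_eq_zero_iff_of_nonneg ha).1 hA.symm
    rw [← hA, zero_mul, Finset.sum_eq_zero fun i hi => by rw [ha0 i hi, zero_mul]]
  have hB := sum_pos_of_pos_imp_pos hb hab hA
  set A := ∑ i ∈ s, a i
  set B := ∑ i ∈ s, b i
  calc A * log (A / B) = ∑ i ∈ s, (a i * log (A / B) + (a i - A / B * b i)) := by
        rw [Finset.sum_add_distrib, Finset.sum_sub_distrib, ← Finset.sum_mul, ← Finset.mul_sum,
          div_mul_cancel₀ _ hB.ne', sub_self, add_zero]
    _ ≤ ∑ i ∈ s, a i * log (a i / b i) := Finset.sum_le_sum fun i hi =>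
        mul_log_add_sub_le_mul_log_div (ha i hi) (hb i hi) (by positivity) (hab i hi)

end Real

/-- When `m = 0` both sides vanish, because `x / 0 = 0` and `log 0 = 0`. -/
lemma mul_div_mul_log_div_div (m x t : ℝ) :
    m * (x / m * log (x / m / t)) = x * log (x / (m * t)) := by
  rw [div_div]
  rcases eq_or_ne m 0 with rfl | hm
  · simp
  · rw [← mul_assoc, mul_div_cancel₀ _ hm]

omit [Fintype I] [Fintype C] in
lemma margIC_eq_sum_margICD (P : I × R × C × D → ℝ) (i : I) (c : C) :
    margIC P i c = ∑ d, margICD P i c d := Finset.sum_comm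

omit [Fintype I] [Fintype C] in
lemma student_eq_sum_div_margIC (P : I × R × C × D → ℝ) (T : I → R → C → D → ℝ)
    (d : D) (i : I) (c : C) :
    student P T d i c = (∑ r, margIRC P i r c * T i r c d) / margIC P i c := by
  simp only [student, condR_IC, Finset.sum_div, div_mul_eq_mul_div]

omit [Fintype I] [Fintype R] [Fintype C] in
lemma margIRC_mul_kl_eq (P : I × R × C × D → ℝ) (T : I → R → C → D → ℝ)
    (i : I) (r : R) (c : C) :
    margIRC P i r c * (∑ d, condD_IRC P d i r c * log (condD_IRC P d i r c / T i r c d))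
      = ∑ d, P (i, r, c, d) * log (P (i, r, c, d) / (margIRC P i r c * T i r c d)) := by
  simp only [Finset.mul_sum, condD_IRC, mul_div_mul_log_div_div]

omit [Fintype I] [Fintype C] in
lemma margICD_mul_neg_log_student_le (P : I × R × C × D → ℝ) (T : I → R → C → D → ℝ)
    (hP0 : ∀ x, 0 ≤ P x) (hT0 : ∀ i r c d, 0 < T i r c d) (i : I) (c : C) (d : D) :
    margICD P i c d * (-log (student P T d i c))
      ≤ margICD P i c d * (-log (condD_IC P d i c))
        + ∑ r, P (i, r, c, d) * log (P (i, r, c, d) / (margIRC P i r c * T i r c d)) := by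
  have hmargIRC : ∀ r, 0 ≤ margIRC P i r c := fun r => Finset.sum_nonneg fun d _ => hP0 _
  have hmargICD : ∀ d, 0 ≤ margICD P i c d := fun d => Finset.sum_nonneg fun r _ => hP0 _
  have hb : ∀ r ∈ Finset.univ, 0 ≤ margIRC P i r c * T i r c d :=
    fun r _ => mul_nonneg (hmargIRC r) (hT0 i r c d).le
  have hab : ∀ r ∈ Finset.univ, 0 < P (i, r, c, d) → 0 < margIRC P i r c * T i r c d :=
    fun r _ hr => mul_pos (hr.trans_le (Finset.single_le_sum (f := fun d => P (i, r, c, d))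
      (fun d _ => hP0 _) (Finset.mem_univ d))) (hT0 i r c d)
  have hlogsum : margICD P i c d * log (margICD P i c d / ∑ r, margIRC P i r c * T i r c d)
      ≤ ∑ r, P (i, r, c, d) * log (P (i, r, c, d) / (margIRC P i r c * T i r c d)) :=
    sum_mul_log_div_sum_le (fun r _ => hP0 (i, r, c, d)) hb hab
  rcases (hmargICD d).eq_or_lt with hA | hA
  · rw [← hA, zero_mul] at hlogsum
    rwa [← hA, zero_mul, zero_mul, zero_add]
  have hM : 0 < margIC P i c := by
    rw [margIC_eq_sum_margICD]
    exact hA.trans_le (Finset.single_le_sum (fun d _ => hmargICD d) (Finset.mem_univ d))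
  have hB := sum_pos_of_pos_imp_pos hb hab hA
  rw [student_eq_sum_div_margIC, condD_IC, log_div hB.ne' hM.ne', log_div hA.ne' hM.ne']
  rw [log_div hA.ne' hB.ne'] at hlogsum
  linarith

theorem transcriptome_guided_risk_bound_general
    (P : I × R × C × D → ℝ) (T : I → R → C → D → ℝ)
    (hP0 : ∀ x, 0 ≤ P x)
    (hT0 : ∀ i r c d, 0 < T i r c d) :
    ∑ i, ∑ c, ∑ d, margICD P i c d * (-Real.log (student P T d i c))
      ≤ (∑ i, ∑ c, ∑ d, margICD P i c d * (-Real.log (condD_IC P d i c)))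
        + ∑ i, ∑ r, ∑ c, margIRC P i r c *
            (∑ d, condD_IRC P d i r c *
              Real.log (condD_IRC P d i r c / T i r c d)) := by
  have hKL : ∑ i, ∑ r, ∑ c, margIRC P i r c *
        (∑ d, condD_IRC P d i r c * log (condD_IRC P d i r c / T i r c d))
      = ∑ i, ∑ c, ∑ d, ∑ r,
          P (i, r, c, d) * log (P (i, r, c, d) / (margIRC P i r c * T i r c d)) := by
    refine Finset.sum_congr rfl fun i _ => ?_
    simp only [margIRC_mul_kl_eq]
    rw [Finset.sum_comm]
    exact Finset.sum_congr rfl fun c _ => Finset.sum_comm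
  rw [hKL]
  simp only [← Finset.sum_add_distrib]
  gcongr with i _ c _ d _
  exact margICD_mul_neg_log_student_le P T hP0 hT0 i c d

/-- Transcriptome-guided learning risk bound (finite version):
L[S] ≤ H(D | I,C) + E_{(i,r,c)} KL(P(D|i,r,c) ‖ T(·|i,r,c)). -/
theorem transcriptome_guided_risk_bound
    [Nonempty I] [Nonempty R] [Nonempty C] [Nonempty D]
    (P : I × R × C × D → ℝ) (T : I → R → C → D → ℝ)
    (hP0 : ∀ x, 0 ≤ P x) (hP1 : ∑ x, P x = 1)
    (hT0 : ∀ i r c d, 0 < T i r c d) (hT1 : ∀ i r c, ∑ d, T i r c d = 1) :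
    ∑ i, ∑ c, ∑ d, margICD P i c d * (-Real.log (student P T d i c))
      ≤ (∑ i, ∑ c, ∑ d, margICD P i c d * (-Real.log (condD_IC P d i c)))
        + ∑ i, ∑ r, ∑ c, margIRC P i r c *
            (∑ d, condD_IRC P d i r c *
              Real.log (condD_IRC P d i r c / T i r c d)) :=
  transcriptome_guided_risk_bound_general P T hP0 hT0

end
end

section
/- Averaged-conditional KL bound: for a finite probability space over (I, C) × R × D, the expected KL divergence between the true conditional of D given (I,C) and the marginalized predictor S is at most the expected KL divergence between the true conditional of D given (I, R, C) and the teacher T: ∑_{(i,c)} P(i,c)·KL(P(D|i,c) ‖ S(·|i,c)) ≤ ∑_{(i,r,c)} P(i,r,c)·KL(P(D|i,r,c) ‖ T(·|i,r,c)). -/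
open Real

noncomputable section

variable {I R C D : Type*} [Fintype I] [Fintype R] [Fintype C] [Fintype D]

lemma point_ineq {a b c : ℝ} (ha : 0 ≤ a) (hb : 0 ≤ b) (hc : 0 < c)
    (hab : b = 0 → a = 0) :
    a * Real.log c + a - b * c ≤ a * Real.log (a / b) := by
  rcases eq_or_lt_of_le ha with h | h
  · simp only [← h, zero_mul, add_zero, zero_add, zero_sub, neg_nonpos]
    nlinarith [mul_nonneg hb hc.le]
  · have hb0 : 0 < b := by
      rcases eq_or_lt_of_le hb with h' | h'
      · exact absurd (hab h'.symm) h.ne'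
      · exact h'
    have h1 : Real.log (b * c / a) ≤ b * c / a - 1 :=
      Real.log_le_sub_one_of_pos (by positivity)
    have h2 : a * Real.log (b * c / a) ≤ b * c - a := by
      have h3 := mul_le_mul_of_nonneg_left h1 h.le
      have h4 : a * (b * c / a - 1) = b * c - a := by field_simp
      linarith
    rw [Real.log_div (by positivity) h.ne', Real.log_mul hb0.ne' hc.ne'] at h2
    rw [Real.log_div h.ne' hb0.ne']
    nlinarith

lemma log_sum_ineq {ι : Type*} [Fintype ι] (a b : ι → ℝ)
    (ha : ∀ r, 0 ≤ a r) (hb : ∀ r, 0 ≤ b r) (hab : ∀ r, b r = 0 → a r = 0) :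
    (∑ r, a r) * Real.log ((∑ r, a r) / (∑ r, b r)) ≤
      ∑ r, a r * Real.log (a r / b r) := by
  rcases eq_or_lt_of_le (Finset.sum_nonneg fun r _ => ha r) with hA | hA
  · have h0 : ∀ r, a r = 0 := by
      intro r
      have := (Finset.sum_eq_zero_iff_of_nonneg (fun r _ => ha r)).mp hA.symm
      exact this r (Finset.mem_univ r)
    simp [h0]
  · have hB : 0 < ∑ r, b r := by
      rcases eq_or_lt_of_le (Finset.sum_nonneg fun r _ => hb r) with h' | h'
      · exfalso
        have h0 : ∀ r, b r = 0 := by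
          intro r
          have := (Finset.sum_eq_zero_iff_of_nonneg (fun r _ => hb r)).mp h'.symm
          exact this r (Finset.mem_univ r)
        have : ∀ r, a r = 0 := fun r => hab r (h0 r)
        simp [this] at hA
      · exact h'
    set A := ∑ r, a r with hAdef
    set B := ∑ r, b r with hBdef
    have key : ∀ r ∈ Finset.univ, a r * Real.log (A / B) + a r - b r * (A / B)
        ≤ a r * Real.log (a r / b r) :=
      fun r _ => point_ineq (ha r) (hb r) (div_pos hA hB) (hab r)
    have hsum := Finset.sum_le_sum key
    have heq : ∑ r, (a r * Real.log (A / B) + a r - b r * (A / B))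
        = A * Real.log (A / B) := by
      rw [Finset.sum_sub_distrib, Finset.sum_add_distrib, ← Finset.sum_mul,
        ← Finset.sum_mul, ← hAdef, ← hBdef, mul_div_cancel₀ _ hB.ne']
      ring
    linarith [hsum, heq.ge]

/-- Averaged-conditional KL bound:
∑_{(i,c)} P(i,c)·KL(P(D|i,c) ‖ S(·|i,c))
  ≤ ∑_{(i,r,c)} P(i,r,c)·KL(P(D|i,r,c) ‖ T(·|i,r,c)). -/
theorem averaged_conditional_kl_bound
    (P : I × R × C × D → ℝ) (T : I → R → C → D → ℝ)
    (hP0 : ∀ x, 0 ≤ P x) (hP1 : ∑ x, P x = 1)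
    (hT0 : ∀ i r c d, 0 < T i r c d) (hT1 : ∀ i r c, ∑ d, T i r c d = 1) :
    ∑ i, ∑ c, margIC P i c *
        (∑ d, condD_IC P d i c *
          Real.log (condD_IC P d i c / student P T d i c))
      ≤ ∑ i, ∑ r, ∑ c, margIRC P i r c *
          (∑ d, condD_IRC P d i r c *
            Real.log (condD_IRC P d i r c / T i r c d)) := by
  have hswap : ∑ i, ∑ r, ∑ c, margIRC P i r c *
      (∑ d, condD_IRC P d i r c * Real.log (condD_IRC P d i r c / T i r c d))
      = ∑ i, ∑ c, ∑ r, margIRC P i r c *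
      (∑ d, condD_IRC P d i r c * Real.log (condD_IRC P d i r c / T i r c d)) :=
    Finset.sum_congr rfl fun i _ => Finset.sum_comm
  rw [hswap]
  refine Finset.sum_le_sum fun i _ => Finset.sum_le_sum fun c _ => ?_
  have hIRC0 : ∀ r, 0 ≤ margIRC P i r c :=
    fun r => Finset.sum_nonneg fun d _ => hP0 _
  have hIC0 : 0 ≤ margIC P i c := Finset.sum_nonneg fun r _ => hIRC0 r
  -- rewrite each RHS summand
  have hR : ∀ r, margIRC P i r c *
      (∑ d, condD_IRC P d i r c * Real.log (condD_IRC P d i r c / T i r c d))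
      = ∑ d, P (i, r, c, d) *
          Real.log (P (i, r, c, d) / (margIRC P i r c * T i r c d)) := by
    intro r
    rcases eq_or_lt_of_le (hIRC0 r) with h | h
    · have hPd : ∀ d, P (i, r, c, d) = 0 := by
        intro d
        have := (Finset.sum_eq_zero_iff_of_nonneg (fun d _ => hP0 _)).mp h.symm
        exact this d (Finset.mem_univ d)
      simp [condD_IRC, ← h, hPd]
    · rw [Finset.mul_sum]
      refine Finset.sum_congr rfl fun d _ => ?_
      rw [condD_IRC, div_div, ← mul_assoc, mul_div_cancel₀ _ h.ne']
  rw [Finset.sum_congr rfl fun r _ => hR r, Finset.sum_comm]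
  rcases eq_or_lt_of_le hIC0 with hm | hm
  · -- margIC = 0 : everything vanishes
    have hPd : ∀ r d, P (i, r, c, d) = 0 := by
      intro r d
      have h1 := (Finset.sum_eq_zero_iff_of_nonneg (fun r _ => hIRC0 r)).mp hm.symm
      have h2 := h1 r (Finset.mem_univ r)
      have := (Finset.sum_eq_zero_iff_of_nonneg (fun d _ => hP0 _)).mp h2
      exact this d (Finset.mem_univ d)
    simp [← hm, hPd]
  · -- margIC > 0
    have hL : margIC P i c * (∑ d, condD_IC P d i c *
        Real.log (condD_IC P d i c / student P T d i c))
        = ∑ d, margICD P i c d *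
            Real.log (margICD P i c d / ∑ r, margIRC P i r c * T i r c d) := by
      rw [Finset.mul_sum]
      refine Finset.sum_congr rfl fun d _ => ?_
      have hmS : margIC P i c * student P T d i c
          = ∑ r, margIRC P i r c * T i r c d := by
        rw [student, Finset.mul_sum]
        refine Finset.sum_congr rfl fun r _ => ?_
        rw [condR_IC, ← mul_assoc, mul_div_assoc', mul_comm (margIC P i c),
          mul_div_assoc, div_self hm.ne', mul_one]
      rw [condD_IC, div_div, hmS, ← mul_assoc, mul_div_cancel₀ _ hm.ne']
    rw [hL]
    refine Finset.sum_le_sum fun d _ => ?_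
    have hab : ∀ r, margIRC P i r c * T i r c d = 0 → P (i, r, c, d) = 0 := by
      intro r h0
      have hm0 : margIRC P i r c = 0 := by
        rcases mul_eq_zero.mp h0 with h | h
        · exact h
        · exact absurd h (hT0 i r c d).ne'
      have := (Finset.sum_eq_zero_iff_of_nonneg (fun d _ => hP0 _)).mp hm0
      exact this d (Finset.mem_univ d)
    exact log_sum_ineq (fun r => P (i, r, c, d)) (fun r => margIRC P i r c * T i r c d)
      (fun r => hP0 _) (fun r => mul_nonneg (hIRC0 r) (hT0 i r c d).le) hab

end
end

section
/- Data-processing-style inequality for the student risk gap: the excess risk of the marginalized student over the Bayes-optimal (I,C)-predictor is at most the teacher's expected KL training loss: L[S_T] - H(D | I, C) ≤ ∑_{(i,r,c)} P(i,r,c) · KL(P(D | i,r,c) ‖ T(· | i,r,c)), where the left side is nonnegative. -/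
open Real

noncomputable section

variable {I R C D : Type*} [Fintype I] [Fintype R] [Fintype C] [Fintype D]

lemma logsum_point {a b c : ℝ} (ha : 0 ≤ a) (hb : 0 ≤ b) (hc : 0 < c)
    (hab : b = 0 → a = 0) :
    a * Real.log c + (a - b * c) ≤ a * Real.log (a / b) := by
  rcases ha.eq_or_lt with h | h
  · rw [← h]
    simp only [zero_mul, zero_add, zero_sub, zero_div]
    nlinarith [mul_nonneg hb hc.le, Real.log_zero]
  · have hb' : 0 < b := by
      rcases hb.eq_or_lt with h0 | h0
      · exact absurd (hab h0.symm) (by linarith)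
      · exact h0
    have hx : 0 < a / (b * c) := by positivity
    have hlog : 1 - (b * c) / a ≤ Real.log (a / (b * c)) := by
      have h1 := Real.log_le_sub_one_of_pos (inv_pos.mpr hx)
      rw [Real.log_inv] at h1
      have : (a / (b * c))⁻¹ = (b * c) / a := by
        rw [inv_div]
      linarith [this ▸ h1]
    have heq : Real.log (a / b) = Real.log (a / (b * c)) + Real.log c := by
      rw [← Real.log_mul (ne_of_gt hx) hc.ne', div_mul_eq_mul_div, mul_div_mul_right _ _ hc.ne']
    rw [heq, mul_add]
    have key : a - b * c ≤ a * Real.log (a / (b * c)) := by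
      have h2 := mul_le_mul_of_nonneg_left hlog h.le
      have h3 : a * (1 - (b * c) / a) = a - b * c := by field_simp
      linarith [h3 ▸ h2]
    linarith

lemma logsum {ι : Type*} [Fintype ι] (a b : ι → ℝ)
    (ha : ∀ x, 0 ≤ a x) (hb : ∀ x, 0 ≤ b x) (hab : ∀ x, b x = 0 → a x = 0) :
    (∑ x, a x) * Real.log ((∑ x, a x) / (∑ x, b x)) ≤ ∑ x, a x * Real.log (a x / b x) := by
  rcases (Finset.sum_nonneg fun x _ => ha x).eq_or_lt with h0 | h0
  · have hz : ∀ x ∈ Finset.univ, a x = 0 :=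
      (Finset.sum_eq_zero_iff_of_nonneg (fun x _ => ha x)).mp h0.symm
    rw [← h0]
    have : ∑ x, a x * Real.log (a x / b x) = 0 :=
      Finset.sum_eq_zero fun x _ => by rw [hz x (Finset.mem_univ x), zero_mul]
    simp [this]
  · obtain ⟨x0, hx0⟩ : ∃ x, 0 < a x := by
      by_contra hcon
      push_neg at hcon
      have : ∑ x, a x ≤ 0 := Finset.sum_nonpos fun x _ => hcon x
      linarith
    have hbx0 : 0 < b x0 :=
      (hb x0).lt_of_ne fun h => hx0.ne' (hab x0 h.symm)
    have hB : 0 < ∑ x, b x :=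
      lt_of_lt_of_le hbx0 (Finset.single_le_sum (fun x _ => hb x) (Finset.mem_univ x0))
    have hc : 0 < (∑ x, a x) / (∑ x, b x) := div_pos h0 hB
    calc (∑ x, a x) * Real.log ((∑ x, a x) / (∑ x, b x))
        = ∑ x, (a x * Real.log ((∑ y, a y) / (∑ y, b y)) + (a x - b x * ((∑ y, a y) / (∑ y, b y)))) := by
          rw [Finset.sum_add_distrib, Finset.sum_sub_distrib, ← Finset.sum_mul, ← Finset.sum_mul]
          have : (∑ x, b x) * ((∑ y, a y) / (∑ y, b y)) = ∑ y, a y := by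
            field_simp
          linarith [this]
      _ ≤ ∑ x, a x * Real.log (a x / b x) :=
          Finset.sum_le_sum fun x _ => logsum_point (ha x) (hb x) hc (hab x)

/-- Data-processing-style inequality for the student risk gap: the excess
risk L[S_T] - H(D|I,C) is nonnegative and at most the teacher's expected KL
training loss. -/
theorem student_excess_risk_bound
    (P : I × R × C × D → ℝ) (T : I → R → C → D → ℝ)
    (hP0 : ∀ x, 0 ≤ P x) (hP1 : ∑ x, P x = 1)
    (hT0 : ∀ i r c d, 0 < T i r c d) (hT1 : ∀ i r c, ∑ d, T i r c d = 1) :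
    ((-∑ i, ∑ c, ∑ d, margICD P i c d * Real.log (student P T d i c))
        - (-∑ i, ∑ c, ∑ d, margICD P i c d * Real.log (condD_IC P d i c))
      ≤ ∑ i, ∑ r, ∑ c, margIRC P i r c *
          (∑ d, condD_IRC P d i r c *
            Real.log (condD_IRC P d i r c / T i r c d)))
    ∧ 0 ≤ (-∑ i, ∑ c, ∑ d, margICD P i c d * Real.log (student P T d i c))
        - (-∑ i, ∑ c, ∑ d, margICD P i c d * Real.log (condD_IC P d i c)) := by
  have hIRC0 : ∀ i r c, 0 ≤ margIRC P i r c :=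
    fun i r c => Finset.sum_nonneg fun d _ => hP0 _
  have hICD0 : ∀ i c d, 0 ≤ margICD P i c d :=
    fun i c d => Finset.sum_nonneg fun r _ => hP0 _
  have hIC0 : ∀ i c, 0 ≤ margIC P i c :=
    fun i c => Finset.sum_nonneg fun r _ => Finset.sum_nonneg fun d _ => hP0 _
  have hsumICD : ∀ i c, ∑ d, margICD P i c d = margIC P i c := by
    intro i c
    simp only [margICD, margIC]
    exact Finset.sum_comm
  have hsumIRC : ∀ i c, ∑ r, margIRC P i r c = margIC P i c := fun i c => rfl
  have hICDle : ∀ i c d, margICD P i c d ≤ margIC P i c := by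
    intro i c d
    rw [← hsumICD i c]
    exact Finset.single_le_sum (fun d _ => hICD0 i c d) (Finset.mem_univ d)
  have hPle : ∀ i r c d, P (i,r,c,d) ≤ margIRC P i r c :=
    fun i r c d => Finset.single_le_sum (fun d' _ => hP0 (i,r,c,d')) (Finset.mem_univ d)
  have hcond1 : ∀ i c, 0 < margIC P i c → ∑ r, condR_IC P r i c = 1 := by
    intro i c hm
    simp only [condR_IC]
    rw [← Finset.sum_div, hsumIRC i c, div_self hm.ne']
  have hstud_nonneg : ∀ i c d, 0 ≤ student P T d i c := fun i c d =>
    Finset.sum_nonneg fun r _ =>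
      mul_nonneg (div_nonneg (hIRC0 i r c) (hIC0 i c)) (hT0 i r c d).le
  have hstud_pos : ∀ i c d, 0 < margIC P i c → 0 < student P T d i c := by
    intro i c d hm
    obtain ⟨r0, hr0⟩ : ∃ r, 0 < condR_IC P r i c := by
      by_contra hcon
      push_neg at hcon
      have h2 : ∑ r, condR_IC P r i c ≤ 0 := Finset.sum_nonpos fun r _ => hcon r
      rw [hcond1 i c hm] at h2
      linarith
    exact Finset.sum_pos'
      (fun r _ => mul_nonneg (div_nonneg (hIRC0 i r c) (hIC0 i c)) (hT0 i r c d).le)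
      ⟨r0, Finset.mem_univ r0, mul_pos hr0 (hT0 i r0 c d)⟩
  have hB : ∀ i c d, 0 < margIC P i c →
      ∑ r, margIRC P i r c * T i r c d = margIC P i c * student P T d i c := by
    intro i c d hm
    rw [student, Finset.mul_sum]
    refine Finset.sum_congr rfl fun r _ => ?_
    rw [condR_IC]
    field_simp
  have hE : (-∑ i, ∑ c, ∑ d, margICD P i c d * Real.log (student P T d i c))
        - (-∑ i, ∑ c, ∑ d, margICD P i c d * Real.log (condD_IC P d i c))
      = ∑ i, ∑ c, ∑ d, margICD P i c d *
          (Real.log (condD_IC P d i c) - Real.log (student P T d i c)) := by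
    simp only [mul_sub, Finset.sum_sub_distrib]
    ring
  rw [hE]
  have hlhs : ∀ i c d, 0 < margICD P i c d → 0 < margIC P i c →
      Real.log (condD_IC P d i c) - Real.log (student P T d i c)
        = Real.log (margICD P i c d / (margIC P i c * student P T d i c)) := by
    intro i c d hp hm
    have hS := hstud_pos i c d hm
    rw [condD_IC, Real.log_div hp.ne' hm.ne', Real.log_div hp.ne' (mul_pos hm hS).ne',
      Real.log_mul hm.ne' hS.ne']
    ring
  have hkey : ∀ i c d,
      margICD P i c d * (Real.log (condD_IC P d i c) - Real.log (student P T d i c))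
      ≤ ∑ r, P (i,r,c,d) * Real.log (P (i,r,c,d) / (margIRC P i r c * T i r c d)) := by
    intro i c d
    rcases (hICD0 i c d).eq_or_lt with hp | hp
    · have hz : ∀ r, P (i,r,c,d) = 0 := fun r =>
        (Finset.sum_eq_zero_iff_of_nonneg (fun r _ => hP0 _)).mp hp.symm r (Finset.mem_univ r)
      rw [← hp, zero_mul]
      exact Finset.sum_nonneg fun r _ => le_of_eq (by rw [hz r, zero_mul])
    · have hm : 0 < margIC P i c := lt_of_lt_of_le hp (hICDle i c d)
      rw [hlhs i c d hp hm]
      have hls := logsum (fun r => P (i,r,c,d)) (fun r => margIRC P i r c * T i r c d)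
        (fun r => hP0 _) (fun r => mul_nonneg (hIRC0 i r c) (hT0 i r c d).le)
        (fun r h => by
          have hm0 : margIRC P i r c = 0 := by
            rcases mul_eq_zero.mp h with h' | h'
            · exact h'
            · exact absurd h' (hT0 i r c d).ne'
          exact le_antisymm (hm0 ▸ hPle i r c d) (hP0 _))
      beta_reduce at hls
      rw [hB i c d hm] at hls
      exact hls
  constructor
  · have hR : ∑ i, ∑ r, ∑ c, margIRC P i r c *
          (∑ d, condD_IRC P d i r c * Real.log (condD_IRC P d i r c / T i r c d))
        = ∑ i, ∑ c, ∑ d, ∑ r,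
            P (i,r,c,d) * Real.log (P (i,r,c,d) / (margIRC P i r c * T i r c d)) := by
      refine Finset.sum_congr rfl fun i _ => ?_
      rw [Finset.sum_comm]
      refine Finset.sum_congr rfl fun c _ => ?_
      simp only [Finset.mul_sum]
      rw [Finset.sum_comm]
      refine Finset.sum_congr rfl fun d _ => Finset.sum_congr rfl fun r _ => ?_
      rcases (hIRC0 i r c).eq_or_lt with h | h
      · have hP' : P (i,r,c,d) = 0 := le_antisymm (h ▸ hPle i r c d) (hP0 _)
        rw [← h, zero_mul, hP', zero_mul]
      · have hcancel : margIRC P i r c * (P (i,r,c,d) / margIRC P i r c) = P (i,r,c,d) := by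
          field_simp
        rw [condD_IRC, div_div, ← mul_assoc, hcancel]
    rw [hR]
    exact Finset.sum_le_sum fun i _ => Finset.sum_le_sum fun c _ =>
      Finset.sum_le_sum fun d _ => hkey i c d
  · refine Finset.sum_nonneg fun i _ => Finset.sum_nonneg fun c _ => ?_
    rcases (hIC0 i c).eq_or_lt with hm | hm
    · have hz : ∀ d, margICD P i c d = 0 := by
        intro d
        have := hsumICD i c
        rw [← hm] at this
        exact (Finset.sum_eq_zero_iff_of_nonneg (fun d _ => hICD0 i c d)).mp this d
          (Finset.mem_univ d)
      exact Finset.sum_nonneg fun d _ => le_of_eq (by rw [hz d, zero_mul])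
    · have h1 : ∑ d, student P T d i c = 1 := by
        simp only [student]
        rw [Finset.sum_comm]
        simp only [← Finset.mul_sum]
        simp only [hT1, mul_one]
        exact hcond1 i c hm
      have hls := logsum (fun d => margICD P i c d)
        (fun d => margIC P i c * student P T d i c)
        (fun d => hICD0 i c d)
        (fun d => mul_nonneg (hIC0 i c) (hstud_nonneg i c d))
        (fun d h => absurd h (mul_pos hm (hstud_pos i c d hm)).ne')
      beta_reduce at hls
      rw [hsumICD i c] at hls
      rw [show ∑ d, margIC P i c * student P T d i c = margIC P i c by
            rw [← Finset.mul_sum, h1, mul_one]] at hls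
      rw [div_self hm.ne', Real.log_one, mul_zero] at hls
      refine le_trans hls (le_of_eq (Finset.sum_congr rfl fun d _ => ?_))
      rcases (hICD0 i c d).eq_or_lt with hp | hp
      · rw [← hp, zero_mul, zero_mul]
      · rw [hlhs i c d hp hm]

end
end
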